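/- For nonzero vectors u, û, v, v̂, dist(u vᵀ, û v̂ᵀ) ≥ dist(u,û) · dist(v,v̂). -/

import Mathlib

open Matrix

/-- dist² via the normalized (Frobenius) inner product. -/
noncomputable def mDistSq {m n : Type*} [Fintype m] [Fintype n] (A B : Matrix m n ℝ) : ℝ :=
  1 - (∑ i, ∑ j, A i j * B i j) ^ 2 /
    ((∑ i, ∑ j, A i j * A i j) * (∑ i, ∑ j, B i j * B i j))

/-- dist = sqrt of dist². -/
noncomputable def mDist {m n : Type*} [Fintype m] [Fintype n] (A B : Matrix m n ℝ) : ℝ :=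
  Real.sqrt (mDistSq A B)

/-- dist² for vectors. -/
noncomputable def vDistSq {n : ℕ} (u v : Fin n → ℝ) : ℝ :=
  1 - (∑ i, u i * v i) ^ 2 / ((∑ i, u i * u i) * (∑ i, v i * v i))

/-- dist for vectors. -/
noncomputable def vDist {n : ℕ} (u v : Fin n → ℝ) : ℝ :=
  Real.sqrt (vDistSq u v)

private lemma sum_sq_pos' {n : ℕ} {u : Fin n → ℝ} (hu : u ≠ 0) :
    0 < ∑ i, u i * u i := by
  obtain ⟨i, hi⟩ : ∃ i, u i ≠ 0 := by
    by_contra h; push_neg at h; exact hu (funext h)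
  exact Finset.sum_pos' (fun j _ => mul_self_nonneg _)
    ⟨i, Finset.mem_univ i, mul_self_pos.mpr hi⟩

/-- dist(u vᵀ, û v̂ᵀ) ≥ dist(u,û) · dist(v,v̂). -/
theorem stmt_4 {d p : ℕ} (u uh : Fin d → ℝ) (v vh : Fin p → ℝ)
    (hu : u ≠ 0) (huh : uh ≠ 0) (hv : v ≠ 0) (hvh : vh ≠ 0) :
    vDist u uh * vDist v vh ≤ mDist (vecMulVec u v) (vecMulVec uh vh) := by
  set A := ∑ i, u i * uh i with hA
  set B := ∑ i, v i * vh i with hB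
  have hSu := sum_sq_pos' hu
  have hSuh := sum_sq_pos' huh
  have hSv := sum_sq_pos' hv
  have hSvh := sum_sq_pos' hvh
  set Su := ∑ i, u i * u i
  set Suh := ∑ i, uh i * uh i
  set Sv := ∑ i, v i * v i
  set Svh := ∑ i, vh i * vh i
  -- Cauchy-Schwarz
  have hCSu : A ^ 2 ≤ Su * Suh := by
    have := Finset.sum_mul_sq_le_sq_mul_sq Finset.univ u uh
    simpa [sq] using this
  have hCSv : B ^ 2 ≤ Sv * Svh := by
    have := Finset.sum_mul_sq_le_sq_mul_sq Finset.univ v vh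
    simpa [sq] using this
  set a := A ^ 2 / (Su * Suh) with ha
  set b := B ^ 2 / (Sv * Svh) with hb
  have ha0 : 0 ≤ a := by positivity
  have hb0 : 0 ≤ b := by positivity
  have ha1 : a ≤ 1 := by
    rw [ha, div_le_one (by positivity)]; exact hCSu
  have hb1 : b ≤ 1 := by
    rw [hb, div_le_one (by positivity)]; exact hCSv
  have hm : mDistSq (vecMulVec u v) (vecMulVec uh vh) = 1 - a * b := by
    simp only [mDistSq, vecMulVec_apply]
    have e1 : (∑ i, ∑ j, u i * v j * (uh i * vh j)) = A * B := by
      rw [hA, hB, Finset.sum_mul_sum]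
      apply Finset.sum_congr rfl; intro i _
      apply Finset.sum_congr rfl; intro j _; ring
    have e2 : (∑ i, ∑ j, u i * v j * (u i * v j)) = Su * Sv := by
      rw [Finset.sum_mul_sum]
      apply Finset.sum_congr rfl; intro i _
      apply Finset.sum_congr rfl; intro j _; ring
    have e3 : (∑ i, ∑ j, uh i * vh j * (uh i * vh j)) = Suh * Svh := by
      rw [Finset.sum_mul_sum]
      apply Finset.sum_congr rfl; intro i _
      apply Finset.sum_congr rfl; intro j _; ring
    rw [e1, e2, e3, ha, hb]
    field_simp
  have hvu : vDistSq u uh = 1 - a := by simp [vDistSq, ha]; rfl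
  have hvv : vDistSq v vh = 1 - b := by simp [vDistSq, hb]; rfl
  rw [vDist, vDist, mDist, hm, hvu, hvv, ← Real.sqrt_mul (by linarith)]
  apply Real.sqrt_le_sqrt
  nlinarith
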